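/- Let A have finite positive Lebesgue measure and let f, f' be bounded by M with ‖f − f'‖₂ small. For the softmax densities π = π_f, π' = π_{f'}, the log-densities satisfy ‖log π − log π'‖_{L²} ≤ ‖f − f'‖₂ + |A|^{1/2} e^{2M} K ‖f − f'‖₂ for a constant K depending only on M; i.e. the map f ↦ log π_f is Lipschitz from (bounded subsets of) L² to L². -/

import Mathlib

/-!
Write `g = f - f'` and `C = log Z(f) - log Z(f')`, where `Z(f) = ∫_A exp f`. The difference of the
log-densities is `g - C`, so Minkowski's inequality gives `‖g - C‖₂ ≤ ‖g‖₂ + |C| |A|^{1/2}`.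
On `[-M, M]` the exponential is `e^M`-Lipschitz, and `Z(f), Z(f') ≥ |A| e^{-M}`, where the logarithm
is `e^M / |A|`-Lipschitz; hence `|C| ≤ e^{2M} |A|⁻¹ ‖g‖₁ ≤ e^{2M} |A|^{-1/2} ‖g‖₂` by
Cauchy–Schwarz, and the theorem holds with `K = |A|^{-1/2}`.
-/

open MeasureTheory Real

theorem Real.abs_exp_sub_exp_le_of_le {M x y : ℝ} (hx : x ≤ M) (hy : y ≤ M) :
    |exp x - exp y| ≤ exp M * |x - y| := by
  have := (convex_Iic M).norm_image_sub_le_of_norm_deriv_le (f := exp)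
    (fun z _ => differentiableAt_exp) (fun z hz => by
      rw [Real.deriv_exp, norm_of_nonneg (exp_pos z).le]; exact exp_le_exp.mpr hz) hy hx
  simpa [Real.norm_eq_abs] using this

theorem Real.abs_log_sub_log_le_of_le {m x y : ℝ} (hm : 0 < m) (hx : m ≤ x) (hy : m ≤ y) :
    |log x - log y| ≤ |x - y| / m := by
  have := (convex_Ici m).norm_image_sub_le_of_norm_deriv_le (f := log)
    (fun z hz => differentiableAt_log (hm.trans_le hz).ne') (fun z hz => by
      rw [Real.deriv_log, norm_inv, norm_of_nonneg (hm.trans_le hz).le]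
      exact inv_anti₀ hm hz) hy hx
  simpa [Real.norm_eq_abs, div_eq_inv_mul] using this

namespace MeasureTheory

variable {α : Type*} [MeasurableSpace α] {μ : Measure α}

theorem MemLp.sqrt_integral_sq_eq {f : α → ℝ} (hf : MemLp f 2 μ) :
    √(∫ a, f a ^ 2 ∂μ) = (eLpNorm f 2 μ).toReal := by
  rw [hf.eLpNorm_eq_integral_rpow_norm two_ne_zero ENNReal.ofNat_ne_top,
    ENNReal.toReal_ofReal (by positivity), sqrt_eq_rpow]
  norm_num [Real.norm_eq_abs]

theorem sqrt_integral_sub_const_sq_le [IsFiniteMeasure μ] {g : α → ℝ} (hg : MemLp g 2 μ) (c : ℝ) :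
    √(∫ a, (g a - c) ^ 2 ∂μ) ≤ √(∫ a, g a ^ 2 ∂μ) + |c| * √(μ.real Set.univ) := by
  have hc : MemLp (fun _ : α => c) 2 μ := memLp_const c
  have hgc : √(∫ a, (g a - c) ^ 2 ∂μ) = (eLpNorm (g - fun _ => c) 2 μ).toReal :=
    (hg.sub hc).sqrt_integral_sq_eq
  have hc_norm : (eLpNorm (fun _ : α => c) 2 μ).toReal = |c| * √(μ.real Set.univ) := by
    rw [eLpNorm_const' c two_ne_zero ENNReal.ofNat_ne_top, ENNReal.toReal_mul,
      ← ENNReal.toReal_rpow, sqrt_eq_rpow, measureReal_def]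
    norm_num
  rw [hgc, hg.sqrt_integral_sq_eq, ← hc_norm,
    ← ENNReal.toReal_add hg.eLpNorm_ne_top hc.eLpNorm_ne_top]
  exact ENNReal.toReal_mono (by finiteness)
    (eLpNorm_sub_le hg.aestronglyMeasurable hc.aestronglyMeasurable one_le_two)

theorem integral_abs_le_sqrt_mul_sqrt [IsFiniteMeasure μ] {g : α → ℝ} (hg : MemLp g 2 μ) :
    ∫ a, |g a| ∂μ ≤ √(μ.real Set.univ) * √(∫ a, g a ^ 2 ∂μ) := by
  have hL1 : ∫ a, |g a| ∂μ = (eLpNorm g 1 μ).toReal := by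
    rw [eLpNorm_one_eq_lintegral_enorm, ← integral_norm_eq_lintegral_enorm hg.aestronglyMeasurable]
    rfl
  rw [hL1, hg.sqrt_integral_sq_eq, mul_comm, sqrt_eq_rpow, measureReal_def, ENNReal.toReal_rpow,
    ← ENNReal.toReal_mul]
  refine ENNReal.toReal_mono (by finiteness) ?_
  convert eLpNorm_le_eLpNorm_mul_rpow_measure_univ one_le_two hg.aestronglyMeasurable using 3
  norm_num

noncomputable def logPartition (μ : Measure α) (f : α → ℝ) : ℝ := log (∫ a, exp (f a) ∂μ)

variable [IsFiniteMeasure μ] {f f' : α → ℝ} {M : ℝ}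

theorem integrable_exp_of_ae_le (hf : AEStronglyMeasurable f μ) (hfM : ∀ᵐ a ∂μ, f a ≤ M) :
    Integrable (fun a => exp (f a)) μ :=
  .of_bound (continuous_exp.comp_aestronglyMeasurable hf) (exp M) <| hfM.mono fun a ha => by
    rw [norm_of_nonneg (exp_pos _).le]; exact exp_le_exp.mpr ha

theorem mul_exp_neg_le_integral_exp (hf : AEStronglyMeasurable f μ) (hfM : ∀ᵐ a ∂μ, |f a| ≤ M) :
    μ.real Set.univ * exp (-M) ≤ ∫ a, exp (f a) ∂μ := by
  have hint := integrable_exp_of_ae_le hf (hfM.mono fun a ha => (abs_le.mp ha).2)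
  calc μ.real Set.univ * exp (-M) = ∫ _, exp (-M) ∂μ := by rw [integral_const, smul_eq_mul]
    _ ≤ ∫ a, exp (f a) ∂μ := integral_mono_ae (integrable_const _) hint <|
      hfM.mono fun a ha => exp_le_exp.mpr (neg_le_of_abs_le ha)

theorem abs_integral_exp_sub_le (hf : AEStronglyMeasurable f μ) (hf' : AEStronglyMeasurable f' μ)
    (hfM : ∀ᵐ a ∂μ, |f a| ≤ M) (hf'M : ∀ᵐ a ∂μ, |f' a| ≤ M) :
    |∫ a, exp (f a) ∂μ - ∫ a, exp (f' a) ∂μ| ≤ exp M * ∫ a, |f a - f' a| ∂μ := by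
  have hfM₁ : ∀ᵐ a ∂μ, f a ≤ M := hfM.mono fun a ha => (abs_le.mp ha).2
  have hf'M₁ : ∀ᵐ a ∂μ, f' a ≤ M := hf'M.mono fun a ha => (abs_le.mp ha).2
  have hdiff : Integrable (fun a => f a - f' a) μ :=
    (Integrable.of_bound hf M hfM).sub (.of_bound hf' M hf'M)
  rw [← integral_sub (integrable_exp_of_ae_le hf hfM₁) (integrable_exp_of_ae_le hf' hf'M₁),
    ← integral_const_mul]
  refine abs_integral_le_integral_abs.trans <| integral_mono_of_nonneg
    (ae_of_all _ fun a => abs_nonneg _) (hdiff.abs.const_mul _) ?_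
  filter_upwards [hfM₁, hf'M₁] with a ha ha' using abs_exp_sub_exp_le_of_le ha ha'

theorem abs_logPartition_sub_le [NeZero μ] (hf : AEStronglyMeasurable f μ)
    (hf' : AEStronglyMeasurable f' μ) (hfM : ∀ᵐ a ∂μ, |f a| ≤ M) (hf'M : ∀ᵐ a ∂μ, |f' a| ≤ M) :
    |logPartition μ f - logPartition μ f'| ≤
      exp (2 * M) / μ.real Set.univ * ∫ a, |f a - f' a| ∂μ := by
  have hm : 0 < μ.real Set.univ * exp (-M) := mul_pos measureReal_univ_pos (exp_pos _)
  calc |logPartition μ f - logPartition μ f'|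
      ≤ |∫ a, exp (f a) ∂μ - ∫ a, exp (f' a) ∂μ| / (μ.real Set.univ * exp (-M)) :=
        abs_log_sub_log_le_of_le hm (mul_exp_neg_le_integral_exp hf hfM)
          (mul_exp_neg_le_integral_exp hf' hf'M)
    _ ≤ exp M * (∫ a, |f a - f' a| ∂μ) / (μ.real Set.univ * exp (-M)) := by
        gcongr
        exact abs_integral_exp_sub_le hf hf' hfM hf'M
    _ = exp (2 * M) / μ.real Set.univ * ∫ a, |f a - f' a| ∂μ := by
        rw [two_mul, exp_add, exp_neg]; field_simp

theorem abs_logPartition_sub_mul_sqrt_le [NeZero μ] (hf : AEStronglyMeasurable f μ)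
    (hf' : AEStronglyMeasurable f' μ) (hfM : ∀ᵐ a ∂μ, |f a| ≤ M) (hf'M : ∀ᵐ a ∂μ, |f' a| ≤ M) :
    |logPartition μ f - logPartition μ f'| * √(μ.real Set.univ) ≤
      exp (2 * M) * √(∫ a, (f a - f' a) ^ 2 ∂μ) := by
  have hV : 0 < μ.real Set.univ := measureReal_univ_pos
  have hdiff : MemLp (fun a => f a - f' a) 2 μ :=
    (MemLp.of_bound hf M hfM).sub (.of_bound hf' M hf'M)
  calc |logPartition μ f - logPartition μ f'| * √(μ.real Set.univ)
      ≤ exp (2 * M) / μ.real Set.univ * (∫ a, |f a - f' a| ∂μ) * √(μ.real Set.univ) := by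
        gcongr
        exact abs_logPartition_sub_le hf hf' hfM hf'M
    _ ≤ exp (2 * M) / μ.real Set.univ * (√(μ.real Set.univ) * √(∫ a, (f a - f' a) ^ 2 ∂μ))
          * √(μ.real Set.univ) := by
        gcongr
        exact integral_abs_le_sqrt_mul_sqrt hdiff
    _ = exp (2 * M) * √(∫ a, (f a - f' a) ^ 2 ∂μ) := by
        field_simp
        rw [sq_sqrt hV.le]

theorem sqrt_integral_sq_sub_logPartition_le [NeZero μ] (hf : AEStronglyMeasurable f μ)
    (hf' : AEStronglyMeasurable f' μ) (hfM : ∀ᵐ a ∂μ, |f a| ≤ M) (hf'M : ∀ᵐ a ∂μ, |f' a| ≤ M) :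
    √(∫ a, ((f a - logPartition μ f) - (f' a - logPartition μ f')) ^ 2 ∂μ) ≤
      √(∫ a, (f a - f' a) ^ 2 ∂μ) + exp (2 * M) * √(∫ a, (f a - f' a) ^ 2 ∂μ) := by
  have hdiff : MemLp (fun a => f a - f' a) 2 μ :=
    (MemLp.of_bound hf M hfM).sub (.of_bound hf' M hf'M)
  simp only [sub_sub_sub_comm]
  exact (sqrt_integral_sub_const_sq_le hdiff _).trans
    (add_le_add_right (abs_logPartition_sub_mul_sqrt_le hf hf' hfM hf'M) _)

end MeasureTheory

theorem softmax_log_density_lipschitz_general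
    {d : ℕ} (A : Set (EuclideanSpace ℝ (Fin d)))
    (hA0 : 0 < volume A) (hAfin : volume A < ⊤) (M : ℝ) :
    ∃ K : ℝ, 0 < K ∧ ∃ δ : ℝ, 0 < δ ∧
      ∀ f f' : EuclideanSpace ℝ (Fin d) → ℝ,
        Measurable f → Measurable f' →
        (∀ a ∈ A, |f a| ≤ M) → (∀ a ∈ A, |f' a| ≤ M) →
        Real.sqrt (∫ a in A, (f a - f' a) ^ 2) ≤ δ →
        Real.sqrt (∫ a in A,
            ((f a - Real.log (∫ a' in A, Real.exp (f a')))
              - (f' a - Real.log (∫ a' in A, Real.exp (f' a')))) ^ 2)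
          ≤ Real.sqrt (∫ a in A, (f a - f' a) ^ 2)
            + Real.sqrt ((volume A).toReal) * Real.exp (2 * M) * K
                * Real.sqrt (∫ a in A, (f a - f' a) ^ 2) := by
  have : IsFiniteMeasure (volume.restrict A) := isFiniteMeasure_restrict.mpr hAfin.ne
  have : NeZero (volume.restrict A) := ⟨by simpa using hA0.ne'⟩
  have hV : 0 < (volume A).toReal := ENNReal.toReal_pos hA0.ne' hAfin.ne
  have ae_bound {h : _ → ℝ} (hh : Measurable h) (hhM : ∀ a ∈ A, |h a| ≤ M) :
      ∀ᵐ a ∂volume.restrict A, |h a| ≤ M :=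
    (ae_restrict_iff (measurableSet_le hh.abs measurable_const)).mpr (ae_of_all _ hhM)
  refine ⟨1 / √(volume A).toReal, by positivity, 1, one_pos, fun f f' hf hf' hfM hf'M _ => ?_⟩
  calc _ ≤ _ := sqrt_integral_sq_sub_logPartition_le hf.aestronglyMeasurable
        hf'.aestronglyMeasurable (ae_bound hf hfM) (ae_bound hf' hf'M)
    _ = _ := by field_simp

/-- Lipschitz continuity of `f ↦ log π_f` from (bounded subsets of) `L²(A)` to
`L²(A)`: for `f, f'` bounded by `M` with `‖f - f'‖₂` small, the softmax log-densities satisfy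
`‖log π_f - log π_{f'}‖_{L²} ≤ ‖f - f'‖₂ + |A|^{1/2} e^{2M} K ‖f - f'‖₂`, where `K` depends
only on `M`. -/
theorem softmax_log_density_lipschitz
    {d : ℕ} (A : Set (EuclideanSpace ℝ (Fin d)))
    (hA : IsCompact A) (hA0 : 0 < volume A) (hAfin : volume A < ⊤) (M : ℝ) :
    ∃ K : ℝ, 0 < K ∧ ∃ δ : ℝ, 0 < δ ∧
      ∀ f f' : EuclideanSpace ℝ (Fin d) → ℝ,
        Measurable f → Measurable f' →
        (∀ a ∈ A, |f a| ≤ M) → (∀ a ∈ A, |f' a| ≤ M) →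
        Real.sqrt (∫ a in A, (f a - f' a) ^ 2) ≤ δ →
        Real.sqrt (∫ a in A,
            ((f a - Real.log (∫ a' in A, Real.exp (f a')))
              - (f' a - Real.log (∫ a' in A, Real.exp (f' a')))) ^ 2)
          ≤ Real.sqrt (∫ a in A, (f a - f' a) ^ 2)
            + Real.sqrt ((volume A).toReal) * Real.exp (2 * M) * K
                * Real.sqrt (∫ a in A, (f a - f' a) ^ 2) :=
  softmax_log_density_lipschitz_general A hA0 hAfin M
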